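/- arXiv:1902.05172 — 2 statements merged into one kernel-verified Lean document; each statement's English description precedes it below -/
import Mathlib

section
/- For every finite game A of the tree form, the machine ⊤ has a winning strategy in the parallel disjunction ¬A ∨ A (the 'copy-cat' strategy: mimic in one component each move the environment makes in the other component). -/
/- Finite games as rooted labeled trees: node label = player (`true` = ⊤
machine, `false` = ⊥ environment) who wins if the play ends at that position;
each edge (child) carries the player allowed to make that move. -/
inductive Game : Type where
  | node : Bool → List (Bool × Game) → Game

/-- Negation: swap ⊤ and ⊥ everywhere (in node labels and move prefixes). -/
def Game.neg : Game → Game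
  | .node l cs => .node (!l) (cs.attach.map fun c => (!c.1.1, c.1.2.neg))
decreasing_by
  obtain ⟨⟨b, g⟩, hmem⟩ := c
  have := List.sizeOf_lt_of_mem hmem
  simp at this ⊢
  omega

/-- Parallel disjunction `A ∨ B`: positions are pairs of positions; either
player may move in either component whenever it has a legal move there (so
moves of the two components are arbitrarily interleaved); if the play ends, ⊤
wins iff it wins in at least one component (disjunction of the labels). -/
def Game.por : Game → Game → Game
  | .node la ca, .node lb cb =>
      .node (la || lb)
        ((ca.attach.map fun c => (c.1.1, c.1.2.por (.node lb cb))) ++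
         (cb.attach.map fun c => (c.1.1, (Game.node la ca).por c.1.2)))
termination_by A B => (sizeOf A, sizeOf B)
decreasing_by
  · obtain ⟨⟨b, g⟩, hmem⟩ := c
    have := List.sizeOf_lt_of_mem hmem
    simp at this ⊢
    left; omega
  · obtain ⟨⟨b, g⟩, hmem⟩ := c
    have := List.sizeOf_lt_of_mem hmem
    simp at this ⊢
    right; omega

/-- `Wins A` : the machine ⊤ has a winning strategy in `A`.  At any position ⊤
may either make one of its own moves leading to a position it wins, or wait —
in which case the position's label must be ⊤ (in case the play ends there) and
⊤ must win after every possible environment move. -/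
inductive Wins : Game → Prop where
  | move {l : Bool} {cs : List (Bool × Game)} (c : Bool × Game) :
      c ∈ cs → c.1 = true → Wins c.2 → Wins (.node l cs)
  | wait {cs : List (Bool × Game)} :
      (∀ c ∈ cs, c.1 = false → Wins c.2) → Wins (.node true cs)

/-! Copycat, by induction on `A`. The root of `¬A ∨ A` is labelled `!l || l = true`, so ⊤ may
wait. Negation swaps who makes each move, so an environment move to `A'` in either component is
available to ⊤ in the other one; copying it there leads to `¬A' ∨ A'`. -/

namespace Game

@[elab_as_elim]
theorem mem_induction {motive : Game → Prop} (A : Game)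
    (ind : ∀ l cs, (∀ c ∈ cs, motive c.2) → motive (node l cs)) : motive A :=
  match A with
  | node l cs => ind l cs fun c _ => mem_induction c.2 ind
decreasing_by
  obtain ⟨b, g⟩ := c
  have := List.sizeOf_lt_of_mem ‹(b, g) ∈ cs›
  simp only [node.sizeOf_spec, Prod.mk.sizeOf_spec] at this ⊢
  omega

@[simp]
lemma neg_node (l : Bool) (cs : List (Bool × Game)) :
    (node l cs).neg = node (!l) (cs.map fun c => (!c.1, c.2.neg)) := by
  rw [Game.neg, List.attach_map_val (f := fun c : Bool × Game => (!c.1, c.2.neg))]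

@[simp]
lemma por_node (la lb : Bool) (ca cb : List (Bool × Game)) :
    (node la ca).por (node lb cb) =
      node (la || lb)
        (ca.map (fun c => (c.1, c.2.por (node lb cb))) ++
          cb.map fun c => (c.1, (node la ca).por c.2)) := by
  rw [Game.por, List.attach_map_val (f := fun c : Bool × Game => (c.1, c.2.por (node lb cb))),
    List.attach_map_val (f := fun c : Bool × Game => (c.1, (node la ca).por c.2))]

end Game

open Game

namespace Wins

lemma of_move {l : Bool} {cs : List (Bool × Game)} {g : Game} (hg : (true, g) ∈ cs)
    (hw : Wins g) : Wins (node l cs) :=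
  move _ hg rfl hw

lemma por_of_move_left {l : Bool} {cs : List (Bool × Game)} {g B : Game} (hg : (true, g) ∈ cs)
    (hw : Wins (g.por B)) : Wins ((node l cs).por B) := by
  obtain ⟨lb, cb⟩ := B
  rw [por_node]
  exact of_move (List.mem_append_left _ (List.mem_map.2 ⟨_, hg, rfl⟩)) hw

lemma por_of_move_right {l : Bool} {cs : List (Bool × Game)} {g A : Game} (hg : (true, g) ∈ cs)
    (hw : Wins (A.por g)) : Wins (A.por (node l cs)) := by
  obtain ⟨la, ca⟩ := A
  rw [por_node]
  exact of_move (List.mem_append_right _ (List.mem_map.2 ⟨_, hg, rfl⟩)) hw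

theorem neg_por (A : Game) : Wins (A.neg.por A) := by
  induction A using Game.mem_induction with
  | ind l cs ih =>
    rw [neg_node, por_node, Bool.not_or_self]
    refine wait fun c hc hc_env => ?_
    rcases List.mem_append.1 hc with hleft | hright
    · simp only [List.map_map, List.mem_map, Function.comp_apply] at hleft
      obtain ⟨⟨b, g⟩, hg, rfl⟩ := hleft
      obtain rfl : b = true := by simpa using hc_env
      exact por_of_move_right hg (ih _ hg)
    · obtain ⟨⟨b, g⟩, hg, rfl⟩ := List.mem_map.1 hright
      obtain rfl : b = false := hc_env
      exact por_of_move_left (List.mem_map.2 ⟨_, hg, rfl⟩) (ih _ hg)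

end Wins

/-- for every finite game `A`, the machine has a winning strategy
in the parallel disjunction `¬A ∨ A` (the copy-cat strategy: mimic in one
component each move the environment makes in the other component). -/
theorem wins_excluded_middle_parallel (A : Game) : Wins (A.neg.por A) :=
  Wins.neg_por A
end

section
/- Blass's principle (A ∧ B) ∨ (C ∧ D) → (A ∨ C) ∧ (B ∨ D), with all connectives parallel (multiplicative), is valid in game semantics: for all finite games A, B, C, D the machine has a winning strategy, obtained by a generalized copy-cat pairing. -/
/-- Parallel conjunction: `A ∧ B = ¬(¬A ∨ ¬B)`; played simultaneously in both
components, ⊤ wins iff it wins in both. -/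
def Game.pand (A B : Game) : Game := (A.neg.por B.neg).neg

/-- Implication `A → B = ¬A ∨ B`. -/
def Game.imp (A B : Game) : Game := A.neg.por B

theorem Game.neg_node_s13 (l : Bool) (cs : List (Bool × Game)) :
    Game.neg (.node l cs) = .node (!l) (cs.map fun c => (!c.1, c.2.neg)) := by
  rw [Game.neg]
  simp [List.attach_map_val]
  exact List.attach_map_val (f := fun c : Bool × Game => (!c.1, c.2.neg))

theorem Game.por_node_s13 (la lb : Bool) (ca cb : List (Bool × Game)) :
    Game.por (.node la ca) (.node lb cb) =
      .node (la || lb)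
        ((ca.map fun c => (c.1, c.2.por (.node lb cb))) ++
         (cb.map fun c => (c.1, (Game.node la ca).por c.2))) := by
  rw [Game.por]
  simp [List.attach_map_val]
  exact congrArg₂ (· ++ ·) (List.attach_map_val (f := fun c : Bool × Game => (c.1, c.2.por (.node lb cb))))
    (List.attach_map_val (f := fun c : Bool × Game => (c.1, (Game.node la ca).por c.2)))
def S8 (a1 b1 c1 d1 a2 c2 b2 d2 : Game) : Game :=
  (((a1.pand b1).por (c1.pand d1)).neg).por ((a2.por c2).pand (b2.por d2))

theorem S8_node (la lb lc ld la2 lb2 lc2 ld2 : Bool)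
    (ca cb cc cd ca2 cb2 cc2 cd2 : List (Bool × Game)) :
    S8 (.node la ca) (.node lb cb) (.node lc cc) (.node ld cd)
       (.node la2 ca2) (.node lc2 cc2) (.node lb2 cb2) (.node ld2 cd2) =
    .node ((!(la && lb || lc && ld)) || ((la2 || lc2) && (lb2 || ld2)))
      ((ca.map fun c => (!c.1, S8 c.2 (.node lb cb) (.node lc cc) (.node ld cd) (.node la2 ca2) (.node lc2 cc2) (.node lb2 cb2) (.node ld2 cd2))) ++
       (cb.map fun c => (!c.1, S8 (.node la ca) c.2 (.node lc cc) (.node ld cd) (.node la2 ca2) (.node lc2 cc2) (.node lb2 cb2) (.node ld2 cd2))) ++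
       (cc.map fun c => (!c.1, S8 (.node la ca) (.node lb cb) c.2 (.node ld cd) (.node la2 ca2) (.node lc2 cc2) (.node lb2 cb2) (.node ld2 cd2))) ++
       (cd.map fun c => (!c.1, S8 (.node la ca) (.node lb cb) (.node lc cc) c.2 (.node la2 ca2) (.node lc2 cc2) (.node lb2 cb2) (.node ld2 cd2))) ++
       (ca2.map fun c => (c.1, S8 (.node la ca) (.node lb cb) (.node lc cc) (.node ld cd) c.2 (.node lc2 cc2) (.node lb2 cb2) (.node ld2 cd2))) ++
       (cc2.map fun c => (c.1, S8 (.node la ca) (.node lb cb) (.node lc cc) (.node ld cd) (.node la2 ca2) c.2 (.node lb2 cb2) (.node ld2 cd2))) ++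
       (cb2.map fun c => (c.1, S8 (.node la ca) (.node lb cb) (.node lc cc) (.node ld cd) (.node la2 ca2) (.node lc2 cc2) c.2 (.node ld2 cd2))) ++
       (cd2.map fun c => (c.1, S8 (.node la ca) (.node lb cb) (.node lc cc) (.node ld cd) (.node la2 ca2) (.node lc2 cc2) (.node lb2 cb2) c.2))) := by
  simp only [S8, Game.pand, Game.neg_node_s13, Game.por_node_s13, List.map_append, List.map_map,
    Function.comp_def, Bool.not_not, Bool.not_or, Bool.not_and, List.append_assoc]
theorem bool_taut (la lb lc ld : Bool) :
    ((!(la && lb || lc && ld)) || ((la || lc) && (lb || ld))) = true := by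
  cases la <;> cases lb <;> cases lc <;> cases ld <;> rfl

theorem wins_S8 : ∀ (a b c d : Game), Wins (S8 a b c d a c b d)
  | .node la ca, .node lb cb, .node lc cc, .node ld cd => by
    rw [S8_node, bool_taut]
    apply Wins.wait
    intro e he hfalse
    simp only [List.mem_append, List.mem_map] at he
    rcases he with (((((((⟨x, hx, rfl⟩ | ⟨x, hx, rfl⟩) | ⟨x, hx, rfl⟩) | ⟨x, hx, rfl⟩) |
      ⟨x, hx, rfl⟩) | ⟨x, hx, rfl⟩) | ⟨x, hx, rfl⟩) | ⟨x, hx, rfl⟩)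
    · obtain ⟨p, xa⟩ := x
      obtain ⟨lx, cx⟩ := xa
      dsimp only at hfalse ⊢
      rw [S8_node]
      refine Wins.move (p, S8 (.node lx cx) (.node lb cb) (.node lc cc) (.node ld cd) (.node lx cx) (.node lc cc) (.node lb cb) (.node ld cd)) ?_ ?_ ?_
      · simp only [List.mem_append, List.mem_map]
        exact Or.inl (Or.inl (Or.inl (Or.inr ⟨(p, .node lx cx), hx, rfl⟩)))
      · exact (by simpa using hfalse)
      · exact wins_S8 (.node lx cx) (.node lb cb) (.node lc cc) (.node ld cd)
    · obtain ⟨p, xa⟩ := x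
      obtain ⟨lx, cx⟩ := xa
      dsimp only at hfalse ⊢
      rw [S8_node]
      refine Wins.move (p, S8 (.node la ca) (.node lx cx) (.node lc cc) (.node ld cd) (.node la ca) (.node lc cc) (.node lx cx) (.node ld cd)) ?_ ?_ ?_
      · simp only [List.mem_append, List.mem_map]
        exact Or.inl (Or.inr ⟨(p, .node lx cx), hx, rfl⟩)
      · exact (by simpa using hfalse)
      · exact wins_S8 (.node la ca) (.node lx cx) (.node lc cc) (.node ld cd)
    · obtain ⟨p, xa⟩ := x
      obtain ⟨lx, cx⟩ := xa
      dsimp only at hfalse ⊢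
      rw [S8_node]
      refine Wins.move (p, S8 (.node la ca) (.node lb cb) (.node lx cx) (.node ld cd) (.node la ca) (.node lx cx) (.node lb cb) (.node ld cd)) ?_ ?_ ?_
      · simp only [List.mem_append, List.mem_map]
        exact Or.inl (Or.inl (Or.inr ⟨(p, .node lx cx), hx, rfl⟩))
      · exact (by simpa using hfalse)
      · exact wins_S8 (.node la ca) (.node lb cb) (.node lx cx) (.node ld cd)
    · obtain ⟨p, xa⟩ := x
      obtain ⟨lx, cx⟩ := xa
      dsimp only at hfalse ⊢
      rw [S8_node]
      refine Wins.move (p, S8 (.node la ca) (.node lb cb) (.node lc cc) (.node lx cx) (.node la ca) (.node lc cc) (.node lb cb) (.node lx cx)) ?_ ?_ ?_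
      · simp only [List.mem_append, List.mem_map]
        exact Or.inr ⟨(p, .node lx cx), hx, rfl⟩
      · exact (by simpa using hfalse)
      · exact wins_S8 (.node la ca) (.node lb cb) (.node lc cc) (.node lx cx)
    · obtain ⟨p, xa⟩ := x
      obtain ⟨lx, cx⟩ := xa
      dsimp only at hfalse ⊢
      rw [S8_node]
      refine Wins.move (!p, S8 (.node lx cx) (.node lb cb) (.node lc cc) (.node ld cd) (.node lx cx) (.node lc cc) (.node lb cb) (.node ld cd)) ?_ ?_ ?_
      · simp only [List.mem_append, List.mem_map]
        exact Or.inl (Or.inl (Or.inl (Or.inl (Or.inl (Or.inl (Or.inl (⟨(p, .node lx cx), hx, rfl⟩)))))))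
      · exact (by simp [hfalse])
      · exact wins_S8 (.node lx cx) (.node lb cb) (.node lc cc) (.node ld cd)
    · obtain ⟨p, xa⟩ := x
      obtain ⟨lx, cx⟩ := xa
      dsimp only at hfalse ⊢
      rw [S8_node]
      refine Wins.move (!p, S8 (.node la ca) (.node lb cb) (.node lx cx) (.node ld cd) (.node la ca) (.node lx cx) (.node lb cb) (.node ld cd)) ?_ ?_ ?_
      · simp only [List.mem_append, List.mem_map]
        exact Or.inl (Or.inl (Or.inl (Or.inl (Or.inl (Or.inr ⟨(p, .node lx cx), hx, rfl⟩)))))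
      · exact (by simp [hfalse])
      · exact wins_S8 (.node la ca) (.node lb cb) (.node lx cx) (.node ld cd)
    · obtain ⟨p, xa⟩ := x
      obtain ⟨lx, cx⟩ := xa
      dsimp only at hfalse ⊢
      rw [S8_node]
      refine Wins.move (!p, S8 (.node la ca) (.node lx cx) (.node lc cc) (.node ld cd) (.node la ca) (.node lc cc) (.node lx cx) (.node ld cd)) ?_ ?_ ?_
      · simp only [List.mem_append, List.mem_map]
        exact Or.inl (Or.inl (Or.inl (Or.inl (Or.inl (Or.inl (Or.inr ⟨(p, .node lx cx), hx, rfl⟩))))))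
      · exact (by simp [hfalse])
      · exact wins_S8 (.node la ca) (.node lx cx) (.node lc cc) (.node ld cd)
    · obtain ⟨p, xa⟩ := x
      obtain ⟨lx, cx⟩ := xa
      dsimp only at hfalse ⊢
      rw [S8_node]
      refine Wins.move (!p, S8 (.node la ca) (.node lb cb) (.node lc cc) (.node lx cx) (.node la ca) (.node lc cc) (.node lb cb) (.node lx cx)) ?_ ?_ ?_
      · simp only [List.mem_append, List.mem_map]
        exact Or.inl (Or.inl (Or.inl (Or.inl (Or.inr ⟨(p, .node lx cx), hx, rfl⟩))))
      · exact (by simp [hfalse])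
      · exact wins_S8 (.node la ca) (.node lb cb) (.node lc cc) (.node lx cx)
termination_by a b c d => sizeOf a + sizeOf b + sizeOf c + sizeOf d
decreasing_by
  all_goals
    (have := List.sizeOf_lt_of_mem hx; simp at this ⊢; omega)

/-- Blass's principle
`(A ∧ B) ∨ (C ∧ D) → (A ∨ C) ∧ (B ∨ D)`, with all connectives parallel
(multiplicative), is valid: for all finite games `A`, `B`, `C`, `D` the
machine has a winning strategy, obtained by a generalized copy-cat pairing of
the antecedent occurrences of `A`, `B`, `C`, `D` with the corresponding
consequent occurrences. -/
theorem wins_blass_principle (A B C D : Game) :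
    Wins (((A.pand B).por (C.pand D)).imp ((A.por C).pand (B.por D))) :=
  wins_S8 A B C D
end
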